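/- There exists a constant c > 0, depending only on L and h, such that for all u of class C¹ on M̄, all φ of class C² on M̄, and all continuous ψ on M̄, one has | ∫_M w(u) (∂_z φ) ψ dM | ≤ c |∂_x u| |∂_z φ|^{1/2} ‖∂_z φ‖_{H¹}^{1/2} |ψ|, where w(u)(x,z) = ∫_z^0 ∂_x u(x,s) ds. -/

import Mathlib

open MeasureTheory Set intervalIntegral

/-- Partial derivative in the first (horizontal, `x`) variable. -/
noncomputable def pdx (f : ℝ × ℝ → ℝ) (p : ℝ × ℝ) : ℝ := fderiv ℝ f p (1, 0)

/-- Partial derivative in the second (vertical, `z`) variable. -/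
noncomputable def pdz (f : ℝ × ℝ → ℝ) (p : ℝ × ℝ) : ℝ := fderiv ℝ f p (0, 1)

/-- The diagnostic vertical velocity `w(u)(x,z) = ∫_z^0 ∂ₓ u(x,s) ds`. -/
noncomputable def wOp (u : ℝ × ℝ → ℝ) (p : ℝ × ℝ) : ℝ := ∫ s in p.2..0, pdx u (p.1, s)

/-- The open domain `M = (0,L) × (-h,0)`. -/
def dom (L h : ℝ) : Set (ℝ × ℝ) := Ioo 0 L ×ˢ Ioo (-h) 0

/-- The closed domain `M̄ = [0,L] × [-h,0]`. -/
def cdom (L h : ℝ) : Set (ℝ × ℝ) := Icc 0 L ×ˢ Icc (-h) 0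

/-- The `L²(M)` norm. -/
noncomputable def l2 (L h : ℝ) (f : ℝ × ℝ → ℝ) : ℝ :=
  Real.sqrt (∫ p in dom L h, f p ^ 2)

/-- The `H¹(M)` norm. -/
noncomputable def h1n (L h : ℝ) (f : ℝ × ℝ → ℝ) : ℝ :=
  Real.sqrt (l2 L h f ^ 2 + l2 L h (pdx f) ^ 2 + l2 L h (pdz f) ^ 2)

/-- The `H²(M)` norm. -/
noncomputable def h2n (L h : ℝ) (f : ℝ × ℝ → ℝ) : ℝ :=
  Real.sqrt (h1n L h f ^ 2 + l2 L h (pdx (pdx f)) ^ 2 + l2 L h (pdx (pdz f)) ^ 2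
    + l2 L h (pdz (pdz f)) ^ 2)

/-!
Write `F = ∂_z φ`. By Cauchy–Schwarz on `M` it suffices to bound `∫_M (w(u) F)²`.
Cauchy–Schwarz in the vertical variable gives `w(u)(x,z)² ≤ h ∫_{-h}^0 (∂ₓu)²(x,s) ds`, a function
of `x` alone, so it remains to bound every vertical slice of `F` uniformly in `x`. Integrating
`F(x₀,z)² - F(x,z)² = ∫_x^{x₀} 2 F ∂ₓF` over `z` and averaging over `x ∈ (0,L)` gives the
Agmon-type trace bound `∫_{-h}^0 F(x₀,z)² dz ≤ |F|²/L + 2 |F| |∂ₓF| ≤ (1/L + 2) |F| ‖F‖_{H¹}`.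
Altogether `c = √(h (1/L + 2))` works.
-/

section CauchySchwarz

variable {α : Type*} [MeasurableSpace α] {μ : Measure α} {f g : α → ℝ}

theorem abs_integral_mul_le_sqrt_mul_sqrt (hf : MemLp f 2 μ) (hg : MemLp g 2 μ) :
    |∫ x, f x * g x ∂μ| ≤ √(∫ x, f x ^ 2 ∂μ) * √(∫ x, g x ^ 2 ∂μ) := by
  have holder := integral_mul_norm_le_Lp_mul_Lq (μ := μ) Real.HolderConjugate.two_two
    (by simpa using hf) (by simpa using hg)
  simp only [Real.norm_eq_abs, Real.rpow_two, sq_abs, ← Real.sqrt_eq_rpow] at holder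
  calc |∫ x, f x * g x ∂μ| ≤ ∫ x, |f x| * |g x| ∂μ := by
        simpa only [Real.norm_eq_abs, abs_mul] using
          norm_integral_le_integral_norm (μ := μ) fun x ↦ f x * g x
    _ ≤ _ := holder

variable [TopologicalSpace α] [T2Space α] [OpensMeasurableSpace α] [IsFiniteMeasureOnCompacts μ]

theorem Continuous.memLp_two_restrict_of_subset_isCompact (hf : Continuous f) {s K : Set α}
    (hK : IsCompact K) (hsK : s ⊆ K) : MemLp f 2 (μ.restrict s) :=
  (memLp_two_iff_integrable_sq hf.aestronglyMeasurable).2 <|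
    ((hf.pow 2).continuousOn.integrableOn_compact hK).mono_set hsK

theorem abs_setIntegral_mul_le_of_continuous (hf : Continuous f) (hg : Continuous g)
    {s K : Set α} (hK : IsCompact K) (hsK : s ⊆ K) :
    |∫ x in s, f x * g x ∂μ| ≤ √(∫ x in s, f x ^ 2 ∂μ) * √(∫ x in s, g x ^ 2 ∂μ) :=
  abs_integral_mul_le_sqrt_mul_sqrt (hf.memLp_two_restrict_of_subset_isCompact hK hsK)
    (hg.memLp_two_restrict_of_subset_isCompact hK hsK)

end CauchySchwarz

section Domain

variable {L h : ℝ}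

theorem dom_subset_cdom : dom L h ⊆ cdom L h :=
  prod_mono Ioo_subset_Icc_self Ioo_subset_Icc_self

theorem isCompact_cdom : IsCompact (cdom L h) := isCompact_Icc.prod isCompact_Icc

theorem l2_nonneg (f : ℝ × ℝ → ℝ) : 0 ≤ l2 L h f := Real.sqrt_nonneg _

theorem sq_l2 (f : ℝ × ℝ → ℝ) : l2 L h f ^ 2 = ∫ p in dom L h, f p ^ 2 :=
  Real.sq_sqrt <| setIntegral_nonneg (measurableSet_Ioo.prod measurableSet_Ioo)
    fun _ _ ↦ sq_nonneg _

theorem abs_integral_dom_mul_le {f g : ℝ × ℝ → ℝ} (hf : Continuous f) (hg : Continuous g) :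
    |∫ p in dom L h, f p * g p| ≤ l2 L h f * l2 L h g :=
  abs_setIntegral_mul_le_of_continuous hf hg isCompact_cdom dom_subset_cdom

theorem volume_restrict_dom :
    volume.restrict (dom L h) =
      (volume.restrict (Ioo 0 L)).prod (volume.restrict (Ioo (-h) 0)) := by
  rw [Measure.prod_restrict, ← Measure.volume_eq_prod, dom]

theorem integrable_prod_of_continuous {f : ℝ × ℝ → ℝ} (hf : Continuous f) :
    Integrable f ((volume.restrict (Ioo 0 L)).prod (volume.restrict (Ioo (-h) 0))) := by
  rw [← volume_restrict_dom]
  exact (hf.continuousOn.integrableOn_compact isCompact_cdom).mono_set dom_subset_cdom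

theorem integral_dom_eq_integral_integral {f : ℝ × ℝ → ℝ} (hf : Continuous f) :
    ∫ p in dom L h, f p = ∫ x in Ioo 0 L, ∫ z in Ioo (-h) 0, f (x, z) := by
  rw [volume_restrict_dom, integral_prod f (integrable_prod_of_continuous hf)]

theorem integral_dom_eq_integral_integral_swap {f : ℝ × ℝ → ℝ} (hf : Continuous f) :
    ∫ p in dom L h, f p = ∫ z in Ioo (-h) 0, ∫ x in Ioo 0 L, f (x, z) := by
  rw [volume_restrict_dom, integral_prod_symm f (integrable_prod_of_continuous hf)]

theorem integrableOn_integral_vertical {f : ℝ × ℝ → ℝ} (hf : Continuous f) :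
    IntegrableOn (fun x ↦ ∫ z in Ioo (-h) 0, f (x, z)) (Ioo 0 L) :=
  (integrable_prod_of_continuous hf).integral_prod_left

theorem integrableOn_integral_horizontal {f : ℝ × ℝ → ℝ} (hf : Continuous f) :
    IntegrableOn (fun z ↦ ∫ x in Ioo 0 L, f (x, z)) (Ioo (-h) 0) :=
  (integrable_prod_of_continuous hf).integral_prod_right

end Domain

theorem continuous_pdx {f : ℝ × ℝ → ℝ} (hf : ContDiff ℝ 1 f) : Continuous (pdx f) :=
  (hf.continuous_fderiv one_ne_zero).clm_apply continuous_const

theorem contDiff_pdz {f : ℝ × ℝ → ℝ} (hf : ContDiff ℝ 2 f) : ContDiff ℝ 1 (pdz f) :=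
  (hf.fderiv_right (by norm_num)).clm_apply contDiff_const

theorem hasDerivAt_pdx {f : ℝ × ℝ → ℝ} (hf : Differentiable ℝ f) (t z : ℝ) :
    HasDerivAt (fun s ↦ f (s, z)) (pdx f (t, z)) t :=
  (hf (t, z)).hasFDerivAt.comp_hasDerivAt t ((hasDerivAt_id t).prodMk (hasDerivAt_const t z))

theorem continuous_wOp {u : ℝ × ℝ → ℝ} (hu : ContDiff ℝ 1 u) : Continuous (wOp u) := by
  have hprim : Continuous fun p : ℝ × ℝ ↦ ∫ s in (0 : ℝ)..p.2, pdx u (p.1, s) :=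
    continuous_parametric_primitive_of_continuous (f := fun x s ↦ pdx u (x, s))
      (continuous_pdx hu)
  convert hprim.neg using 1
  funext p
  rw [wOp, integral_symm, Pi.neg_apply]

theorem Continuous.integrableOn_Ioo {f : ℝ → ℝ} (hf : Continuous f) {a b : ℝ} :
    IntegrableOn f (Ioo a b) :=
  hf.integrableOn_Icc.mono_set Ioo_subset_Icc_self

theorem sq_intervalIntegral_le {f : ℝ → ℝ} (hf : Continuous f) {c z d : ℝ} (hcz : c ≤ z)
    (hzd : z ≤ d) : (∫ s in z..d, f s) ^ 2 ≤ (d - c) * ∫ s in Ioo c d, f s ^ 2 := by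
  have hcs := abs_setIntegral_mul_le_of_continuous (μ := volume) hf continuous_const
    (g := fun _ ↦ (1 : ℝ)) isCompact_Icc (Ioo_subset_Icc_self (a := z) (b := d))
  simp only [mul_one, one_pow, setIntegral_const, Real.volume_real_Ioo_of_le hzd,
    smul_eq_mul] at hcs
  have hsq_nonneg : ∀ a b, 0 ≤ ∫ s in Ioo a b, f s ^ 2 := fun a b ↦
    setIntegral_nonneg measurableSet_Ioo fun _ _ ↦ sq_nonneg _
  rw [integral_of_le hzd, integral_Ioc_eq_integral_Ioo, ← sq_abs]
  calc |∫ s in Ioo z d, f s| ^ 2 ≤ (√(∫ s in Ioo z d, f s ^ 2) * √(d - z)) ^ 2 :=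
        pow_le_pow_left₀ (abs_nonneg _) hcs 2
    _ = (d - z) * ∫ s in Ioo z d, f s ^ 2 := by
        rw [mul_pow, Real.sq_sqrt (hsq_nonneg z d), Real.sq_sqrt (by linarith), mul_comm]
    _ ≤ (d - c) * ∫ s in Ioo c d, f s ^ 2 := by
        refine mul_le_mul (by linarith) ?_ (hsq_nonneg z d) (by linarith)
        exact setIntegral_mono_set (hf.pow 2).integrableOn_Ioo
          (ae_of_all _ fun _ ↦ sq_nonneg _) (Ioo_subset_Ioo_left hcz).eventuallyLE

theorem sub_le_setIntegral_abs_deriv {g g' : ℝ → ℝ} (hg : ∀ t, HasDerivAt g (g' t) t)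
    (hg' : Continuous g') {a b x y : ℝ} (hab : a ≤ b) (hx : x ∈ Icc a b) (hy : y ∈ Icc a b) :
    g y - g x ≤ ∫ t in Ioo a b, |g' t| := by
  have hsub : uIoc x y ⊆ uIoc a b := by
    rw [uIoc_of_le hab]
    intro t ht
    rcases mem_uIoc.1 ht with ⟨hxt, hty⟩ | ⟨hyt, htx⟩
    · exact ⟨hx.1.trans_lt hxt, hty.trans hy.2⟩
    · exact ⟨hy.1.trans_lt hyt, htx.trans hx.2⟩
  calc g y - g x = ∫ t in x..y, g' t :=
        (integral_eq_sub_of_hasDerivAt (fun t _ ↦ hg t) (hg'.intervalIntegrable _ _)).symm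
    _ ≤ |(∫ t in x..y, |g' t|)| := (le_abs_self _).trans (by
        simpa only [Real.norm_eq_abs] using norm_integral_le_abs_integral_norm (f := g'))
    _ ≤ |(∫ t in a..b, |g' t|)| :=
        abs_integral_mono_interval hsub (ae_of_all _ fun _ ↦ abs_nonneg _)
          (hg'.abs.intervalIntegrable _ _)
    _ = ∫ t in Ioo a b, |g' t| := by
        rw [integral_of_le hab, integral_Ioc_eq_integral_Ioo,
          abs_of_nonneg (setIntegral_nonneg measurableSet_Ioo fun _ _ ↦ abs_nonneg _)]

theorem le_setIntegral_div_add {g : ℝ → ℝ} {a b x₀ C : ℝ} (hab : a < b)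
    (hg : IntegrableOn g (Ioo a b)) (hle : ∀ x ∈ Ioo a b, g x₀ ≤ g x + C) :
    g x₀ ≤ (∫ x in Ioo a b, g x) / (b - a) + C := by
  have hconst : ∀ c : ℝ, IntegrableOn (fun _ ↦ c) (Ioo a b) := fun c ↦
    integrableOn_const (by simp [Real.volume_Ioo])
  have hint := setIntegral_mono_on (g := fun x ↦ g x + C) (hconst (g x₀)) (hg.add (hconst C))
    measurableSet_Ioo hle
  rw [integral_add hg (hconst C), setIntegral_const, setIntegral_const,
    Real.volume_real_Ioo_of_le hab.le, smul_eq_mul, smul_eq_mul] at hint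
  rw [div_add' _ _ _ (sub_pos.2 hab).ne', le_div_iff₀ (sub_pos.2 hab)]
  linarith

section SliceBound

variable {L h : ℝ} {F : ℝ × ℝ → ℝ}

theorem integral_sq_slice_sub_le (hF : ContDiff ℝ 1 F) (hL : 0 ≤ L) {x y : ℝ}
    (hx : x ∈ Icc 0 L) (hy : y ∈ Icc 0 L) :
    (∫ z in Ioo (-h) 0, F (y, z) ^ 2) - ∫ z in Ioo (-h) 0, F (x, z) ^ 2 ≤
      2 * l2 L h F * l2 L h (pdx F) := by
  have hFc := hF.continuous
  have hFx := continuous_pdx hF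
  have hslice : ∀ z, F (y, z) ^ 2 - F (x, z) ^ 2 ≤
      ∫ t in Ioo 0 L, |2 * F (t, z) * pdx F (t, z)| := fun z ↦
    sub_le_setIntegral_abs_deriv
      (fun t ↦ by simpa using (hasDerivAt_pdx (hF.differentiable one_ne_zero) t z).fun_pow 2)
      (by fun_prop) hL hx hy
  have hD : Continuous fun p ↦ |2 * F p * pdx F p| := by fun_prop
  have hslice_int : ∀ x', IntegrableOn (fun z ↦ F (x', z) ^ 2) (Ioo (-h) 0) := fun _ ↦
    Continuous.integrableOn_Ioo (by fun_prop)
  calc (∫ z in Ioo (-h) 0, F (y, z) ^ 2) - ∫ z in Ioo (-h) 0, F (x, z) ^ 2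
        = ∫ z in Ioo (-h) 0, (F (y, z) ^ 2 - F (x, z) ^ 2) :=
        (integral_sub (hslice_int y) (hslice_int x)).symm
    _ ≤ ∫ z in Ioo (-h) 0, ∫ t in Ioo 0 L, |2 * F (t, z) * pdx F (t, z)| :=
        setIntegral_mono_on (Continuous.integrableOn_Ioo (by fun_prop))
          (integrableOn_integral_horizontal hD) measurableSet_Ioo fun z _ ↦ hslice z
    _ = 2 * ∫ p in dom L h, |F p| * |pdx F p| := by
        rw [← integral_dom_eq_integral_integral_swap hD, ← MeasureTheory.integral_const_mul]
        simp only [abs_mul, abs_two, mul_assoc]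
    _ ≤ 2 * (l2 L h F * l2 L h (pdx F)) := by
        gcongr
        simpa only [l2, sq_abs] using
          (le_abs_self _).trans (abs_integral_dom_mul_le hFc.abs hFx.abs)
    _ = 2 * l2 L h F * l2 L h (pdx F) := (mul_assoc ..).symm

theorem integral_sq_slice_le (hF : ContDiff ℝ 1 F) (hL : 0 < L) {x₀ : ℝ}
    (hx₀ : x₀ ∈ Icc 0 L) :
    ∫ z in Ioo (-h) 0, F (x₀, z) ^ 2 ≤ l2 L h F ^ 2 / L + 2 * l2 L h F * l2 L h (pdx F) := by
  have hF2 : Continuous fun p ↦ F p ^ 2 := hF.continuous.pow 2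
  have havg := le_setIntegral_div_add (x₀ := x₀) hL
    (integrableOn_integral_vertical (h := h) hF2) fun x hx ↦
      sub_le_iff_le_add'.1 (integral_sq_slice_sub_le hF hL.le (Ioo_subset_Icc_self hx) hx₀)
  rwa [← integral_dom_eq_integral_integral hF2, ← sq_l2, sub_zero] at havg

end SliceBound

section Estimate

variable {L h : ℝ}

theorem l2_le_h1n (f : ℝ × ℝ → ℝ) : l2 L h f ≤ h1n L h f :=
  (Real.le_sqrt (l2_nonneg _) (by positivity)).2 <|
    le_add_of_le_of_nonneg (le_add_of_nonneg_right (sq_nonneg _)) (sq_nonneg _)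

theorem l2_pdx_le_h1n (f : ℝ × ℝ → ℝ) : l2 L h (pdx f) ≤ h1n L h f :=
  (Real.le_sqrt (l2_nonneg _) (by positivity)).2 <|
    le_add_of_le_of_nonneg (le_add_of_nonneg_left (sq_nonneg _)) (sq_nonneg _)

theorem l2_sq_div_add_le_mul_h1n (hL : 0 < L) (f : ℝ × ℝ → ℝ) :
    l2 L h f ^ 2 / L + 2 * l2 L h f * l2 L h (pdx f) ≤ (1 / L + 2) * (l2 L h f * h1n L h f) := by
  have hf := l2_nonneg (L := L) (h := h) f
  calc l2 L h f ^ 2 / L + 2 * l2 L h f * l2 L h (pdx f)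
      = 1 / L * (l2 L h f * l2 L h f) + 2 * (l2 L h f * l2 L h (pdx f)) := by ring
    _ ≤ 1 / L * (l2 L h f * h1n L h f) + 2 * (l2 L h f * h1n L h f) := by
        gcongr
        exacts [l2_le_h1n f, l2_pdx_le_h1n f]
    _ = (1 / L + 2) * (l2 L h f * h1n L h f) := by ring

variable {u F : ℝ × ℝ → ℝ}

theorem sq_wOp_le (hu : ContDiff ℝ 1 u) {x z : ℝ} (hz : z ∈ Icc (-h) 0) :
    wOp u (x, z) ^ 2 ≤ h * ∫ s in Ioo (-h) 0, pdx u (x, s) ^ 2 := by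
  simpa [wOp] using sq_intervalIntegral_le ((continuous_pdx hu).comp (Continuous.prodMk_right x))
    hz.1 hz.2

theorem integral_sq_wOp_mul_slice_le (hu : ContDiff ℝ 1 u) (hF : ContDiff ℝ 1 F)
    (hL : 0 < L) (hh : 0 ≤ h) {x : ℝ} (hx : x ∈ Icc 0 L) :
    ∫ z in Ioo (-h) 0, (wOp u (x, z) * F (x, z)) ^ 2 ≤
      (h * ∫ s in Ioo (-h) 0, pdx u (x, s) ^ 2) *
        (l2 L h F ^ 2 / L + 2 * l2 L h F * l2 L h (pdx F)) := by
  have hw := continuous_wOp hu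
  have hFc := hF.continuous
  set a := h * ∫ s in Ioo (-h) 0, pdx u (x, s) ^ 2
  have ha : 0 ≤ a := mul_nonneg hh (setIntegral_nonneg measurableSet_Ioo fun _ _ ↦ sq_nonneg _)
  calc ∫ z in Ioo (-h) 0, (wOp u (x, z) * F (x, z)) ^ 2
      ≤ ∫ z in Ioo (-h) 0, a * F (x, z) ^ 2 := by
        refine setIntegral_mono_on (Continuous.integrableOn_Ioo (by fun_prop))
          (Continuous.integrableOn_Ioo (by fun_prop)) measurableSet_Ioo fun z hz ↦ ?_
        rw [mul_pow]
        exact mul_le_mul_of_nonneg_right (sq_wOp_le hu (Ioo_subset_Icc_self hz)) (sq_nonneg _)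
    _ = a * ∫ z in Ioo (-h) 0, F (x, z) ^ 2 := MeasureTheory.integral_const_mul _ _
    _ ≤ a * (l2 L h F ^ 2 / L + 2 * l2 L h F * l2 L h (pdx F)) :=
        mul_le_mul_of_nonneg_left (integral_sq_slice_le hF hL hx) ha

theorem l2_wOp_mul_le (hu : ContDiff ℝ 1 u) (hF : ContDiff ℝ 1 F) (hL : 0 < L) (hh : 0 ≤ h) :
    l2 L h (fun p ↦ wOp u p * F p) ≤
      √(h * (l2 L h F ^ 2 / L + 2 * l2 L h F * l2 L h (pdx F))) * l2 L h (pdx u) := by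
  set T := l2 L h F ^ 2 / L + 2 * l2 L h F * l2 L h (pdx F)
  have hA2 : Continuous fun p ↦ pdx u p ^ 2 := (continuous_pdx hu).pow 2
  have hwF : Continuous fun p ↦ (wOp u p * F p) ^ 2 :=
    ((continuous_wOp hu).mul hF.continuous).pow 2
  have hsq : l2 L h (fun p ↦ wOp u p * F p) ^ 2 ≤ h * T * l2 L h (pdx u) ^ 2 :=
    calc l2 L h (fun p ↦ wOp u p * F p) ^ 2
        = ∫ x in Ioo 0 L, ∫ z in Ioo (-h) 0, (wOp u (x, z) * F (x, z)) ^ 2 := by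
          rw [sq_l2, integral_dom_eq_integral_integral hwF]
      _ ≤ ∫ x in Ioo 0 L, (h * ∫ s in Ioo (-h) 0, pdx u (x, s) ^ 2) * T :=
          setIntegral_mono_on (integrableOn_integral_vertical hwF)
            (((integrableOn_integral_vertical hA2).const_mul h).mul_const T)
            measurableSet_Ioo fun x hx ↦
              integral_sq_wOp_mul_slice_le hu hF hL hh (Ioo_subset_Icc_self hx)
      _ = h * T * l2 L h (pdx u) ^ 2 := by
          rw [MeasureTheory.integral_mul_const, MeasureTheory.integral_const_mul,
            ← integral_dom_eq_integral_integral hA2, ← sq_l2]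
          ring
  calc l2 L h (fun p ↦ wOp u p * F p) = √(l2 L h (fun p ↦ wOp u p * F p) ^ 2) :=
        (Real.sqrt_sq (l2_nonneg _)).symm
    _ ≤ √(h * T * l2 L h (pdx u) ^ 2) := Real.sqrt_le_sqrt hsq
    _ = √(h * T) * l2 L h (pdx u) := by
        rw [Real.sqrt_mul' _ (sq_nonneg _), Real.sqrt_sq (l2_nonneg _)]

end Estimate

theorem stmt15 (L h : ℝ) (hL : 0 < L) (hh : 0 < h) :
    ∃ c > 0, ∀ u φ ψ : ℝ × ℝ → ℝ,
      ContDiff ℝ 1 u → ContDiff ℝ 2 φ → Continuous ψ →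
      |∫ p in dom L h, wOp u p * pdz φ p * ψ p| ≤
        c * l2 L h (pdx u) * l2 L h (pdz φ) ^ ((1:ℝ)/2) * h1n L h (pdz φ) ^ ((1:ℝ)/2)
          * l2 L h ψ := by
  refine ⟨√h * √(1 / L + 2), by positivity, fun u φ ψ hu hφ hψ ↦ ?_⟩
  have hF := contDiff_pdz hφ
  have hψ2 := l2_nonneg (L := L) (h := h) ψ
  have hA2 := l2_nonneg (L := L) (h := h) (pdx u)
  calc |∫ p in dom L h, wOp u p * pdz φ p * ψ p|
      ≤ l2 L h (fun p ↦ wOp u p * pdz φ p) * l2 L h ψ :=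
        abs_integral_dom_mul_le ((continuous_wOp hu).mul hF.continuous) hψ
    _ ≤ √(h * (l2 L h (pdz φ) ^ 2 / L + 2 * l2 L h (pdz φ) * l2 L h (pdx (pdz φ)))) *
          l2 L h (pdx u) * l2 L h ψ := by
        gcongr
        exact l2_wOp_mul_le hu hF hL hh.le
    _ ≤ √(h * ((1 / L + 2) * (l2 L h (pdz φ) * h1n L h (pdz φ)))) * l2 L h (pdx u) *
          l2 L h ψ := by
        gcongr
        exact l2_sq_div_add_le_mul_h1n hL _
    _ = _ := by
        rw [Real.sqrt_mul hh.le, Real.sqrt_mul (by positivity), Real.sqrt_mul (l2_nonneg _),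
          ← Real.sqrt_eq_rpow, ← Real.sqrt_eq_rpow]
        ring
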